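/- arXiv:1512.01335 — 2 statements merged into one kernel-verified Lean document; each statement's English description precedes it below -/
import Mathlib

section
/- Two nonempty convex sets C and D in R^d can be properly separated (there is an affine hyperplane h with C and D in opposite closed half-spaces determined by h, and not both C and D contained in h) if and only if the relative interiors of C and D are disjoint. -/
/-!
If `x` lies in both relative interiors and `f ≤ c` on `C`, `c ≤ f` on `D`, then `f x = c`; since
from a relative interior point one can step a little beyond any other point of the set, `f` is
then constantly `c` on `C` and on `D`. Conversely, disjoint relative interiors force
`0 ∉ ri (D - C)`. Separating `0` from `D - C` — inside the affine span of `D - C` when `0` lies in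
it, from the whole span otherwise — gives a functional `f ≥ 0` on `D - C`, positive somewhere,
and any `c` between `sup_C f` and `inf_D f` yields a proper separation.
-/

open Set Filter Topology Pointwise

theorem mem_intrinsicInterior_iff_mem_nhdsWithin {𝕜 V P : Type*} [Ring 𝕜] [AddCommGroup V]
    [Module 𝕜 V] [TopologicalSpace P] [AddTorsor V P] {s : Set P} {x : P} :
    x ∈ intrinsicInterior 𝕜 s ↔ x ∈ affineSpan 𝕜 s ∧ s ∈ 𝓝[affineSpan 𝕜 s] x := by
  simp only [mem_intrinsicInterior, mem_interior_iff_mem_nhds]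
  constructor
  · rintro ⟨y, hy, rfl⟩
    exact ⟨y.2, preimage_coe_mem_nhds_subtype.1 hy⟩
  · rintro ⟨hx, hs⟩
    exact ⟨⟨x, hx⟩, preimage_coe_mem_nhds_subtype.2 hs, rfl⟩

theorem Submodule.coe_mem_intrinsicInterior_iff {𝕜 V : Type*} [Ring 𝕜] [AddCommGroup V]
    [Module 𝕜 V] [TopologicalSpace V] {K : Set V} {W : Submodule 𝕜 V}
    (hW : (W : Set V) = affineSpan 𝕜 K) {w : W} :
    (w : V) ∈ intrinsicInterior 𝕜 K ↔ w ∈ interior ((↑) ⁻¹' K : Set W) := by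
  rw [mem_intrinsicInterior_iff_mem_nhdsWithin, mem_interior_iff_mem_nhds, ← hW]
  exact ⟨fun h => preimage_coe_mem_nhds_subtype.2 h.2,
    fun h => ⟨by rw [← SetLike.mem_coe, ← hW]; exact w.2, preimage_coe_mem_nhds_subtype.1 h⟩⟩

section TopologicalVectorSpace

variable {V : Type*} [AddCommGroup V] [Module ℝ V] [TopologicalSpace V]
  [IsTopologicalAddGroup V] [ContinuousSMul ℝ V] {s : Set V} {x y : V}

theorem exists_pos_add_smul_sub_mem_of_mem_intrinsicInterior
    (hx : x ∈ intrinsicInterior ℝ s) (hy : y ∈ s) : ∃ ε : ℝ, 0 < ε ∧ x + ε • (x - y) ∈ s := by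
  obtain ⟨hxA, hs⟩ := mem_intrinsicInterior_iff_mem_nhdsWithin.1 hx
  have hyA := subset_affineSpan ℝ s hy
  have hray : Tendsto (fun t : ℝ => x + t • (x - y)) (𝓝[>] 0) (𝓝[affineSpan ℝ s] x) := by
    refine tendsto_nhdsWithin_iff.2 ⟨?_, Eventually.of_forall fun t => ?_⟩
    · have hcont : Continuous fun t : ℝ => x + t • (x - y) := by fun_prop
      simpa using (hcont.tendsto 0).mono_left nhdsWithin_le_nhds
    · simpa [add_comm] using AffineSubspace.smul_vsub_vadd_mem _ t hxA hyA hxA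
  obtain ⟨ε, hεs, hε⟩ := ((hray.eventually hs).and self_mem_nhdsWithin).exists
  exact ⟨ε, hε, hεs⟩

theorem Convex.combo_intrinsicInterior_self_mem_intrinsicInterior (hs : Convex ℝ s)
    (hx : x ∈ intrinsicInterior ℝ s) (hy : y ∈ s) {a b : ℝ} (ha : 0 < a) (hb : 0 ≤ b)
    (hab : a + b = 1) : a • x + b • y ∈ intrinsicInterior ℝ s := by
  obtain ⟨hxA, hsx⟩ := mem_intrinsicInterior_iff_mem_nhdsWithin.1 hx
  have hyA := subset_affineSpan ℝ s hy
  have hb' : b = 1 - a := by linarith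
  subst hb'
  -- `g` inverts `z ↦ a • z + (1 - a) • y`; it preserves the affine span, and `g z ∈ s → z ∈ s`
  set g : V → V := fun z => a⁻¹ • (z - y) + y
  have hgA : MapsTo g (affineSpan ℝ s) (affineSpan ℝ s) := fun z hz =>
    AffineSubspace.smul_vsub_vadd_mem _ a⁻¹ hz hyA hyA
  have hgx : g (a • x + (1 - a) • y) = x := by
    simp only [g, sub_smul, one_smul]
    rw [show a • x + (y - a • y) - y = a • (x - y) by module, smul_smul, inv_mul_cancel₀ ha.ne',
      one_smul, sub_add_cancel]
  have hcombo : a • x + (1 - a) • y ∈ affineSpan ℝ s := by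
    convert AffineSubspace.smul_vsub_vadd_mem _ a hxA hyA hyA using 1
    simp only [vsub_eq_sub, vadd_eq_add]
    module
  have hg : Tendsto g (𝓝[affineSpan ℝ s] (a • x + (1 - a) • y)) (𝓝[affineSpan ℝ s] x) := by
    have hcont : Continuous g := by fun_prop
    simpa only [hgx] using
      (hcont.continuousWithinAt (x := a • x + (1 - a) • y)).tendsto_nhdsWithin hgA
  refine mem_intrinsicInterior_iff_mem_nhdsWithin.2 ⟨hcombo, ?_⟩
  filter_upwards [hg hsx] with z hz
  convert hs hz hy ha.le hb (by ring) using 1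
  simp only [g, smul_add, smul_smul, mul_inv_cancel₀ ha.ne', one_smul]
  module

theorem LinearMap.eq_of_isMaxOn_of_mem_intrinsicInterior (f : V →ₗ[ℝ] ℝ) (hf : IsMaxOn f s x)
    (hx : x ∈ intrinsicInterior ℝ s) (hy : y ∈ s) : f y = f x := by
  obtain ⟨ε, hε, hmem⟩ := exists_pos_add_smul_sub_mem_of_mem_intrinsicInterior hx hy
  have hle := isMaxOn_iff.1 hf _ hmem
  simp only [map_add, map_smul, map_sub, smul_eq_mul] at hle
  exact le_antisymm (isMaxOn_iff.1 hf y hy) (by nlinarith)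

theorem intrinsicInterior_inter_nonempty_of_zero_mem_intrinsicInterior_sub {C D : Set V}
    (hC : Convex ℝ C) (hD : Convex ℝ D) {a b : V} (ha : a ∈ intrinsicInterior ℝ C)
    (hb : b ∈ intrinsicInterior ℝ D) (h0 : (0 : V) ∈ intrinsicInterior ℝ (D - C)) :
    (intrinsicInterior ℝ C ∩ intrinsicInterior ℝ D).Nonempty := by
  obtain ⟨ε, hε, hmem⟩ := exists_pos_add_smul_sub_mem_of_mem_intrinsicInterior h0
    (sub_mem_sub (intrinsicInterior_subset hb) (intrinsicInterior_subset ha))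
  obtain ⟨y, hy, x, hx, hxy⟩ := hmem
  -- `y - x = ε • (a - b)`, so `x + ε • a = y + ε • b`; rescale to a convex combination
  have hε' : 0 < 1 + ε := by linarith
  have hcomb (p q : V) : (1 + ε)⁻¹ • (q + ε • p) = (ε / (1 + ε)) • p + (1 / (1 + ε)) • q := by
    module
  refine ⟨(1 + ε)⁻¹ • (x + ε • a), ?_, ?_⟩
  · rw [hcomb]
    exact hC.combo_intrinsicInterior_self_mem_intrinsicInterior ha hx (by positivity)
      (by positivity) (by field_simp; ring)
  · have hxy' : x + ε • a = y + ε • b := by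
      linear_combination (norm := module) -hxy
    rw [hxy', hcomb]
    exact hD.combo_intrinsicInterior_self_mem_intrinsicInterior hb hy (by positivity)
      (by positivity) (by field_simp; ring)

end TopologicalVectorSpace

theorem Convex.exists_nonneg_pos_of_zero_notMem_interior {E : Type*} [AddCommGroup E]
    [Module ℝ E] [TopologicalSpace E] [IsTopologicalAddGroup E] [ContinuousSMul ℝ E]
    {K : Set E} (hK : Convex ℝ K) (hne : (interior K).Nonempty) (h0 : (0 : E) ∉ interior K) :
    ∃ f : StrongDual ℝ E, (∀ k ∈ K, 0 ≤ f k) ∧ ∃ k ∈ K, 0 < f k := by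
  obtain ⟨f, hf⟩ := geometric_hahn_banach_point_open hK.interior isOpen_interior h0
  rw [map_zero] at hf
  obtain ⟨q, hq⟩ := hne
  refine ⟨f, fun k hk => ?_, q, interior_subset hq, hf q hq⟩
  have hcl : closure (interior K) ⊆ {z | 0 ≤ f z} :=
    closure_minimal (fun z hz => (hf z hz).le) (isClosed_le continuous_const f.continuous)
  exact hcl (hK.closure_interior_eq_closure_of_nonempty_interior ⟨q, hq⟩ ▸ subset_closure hk)

theorem Convex.exists_nonneg_pos_of_zero_notMem_intrinsicInterior {E : Type*}
    [NormedAddCommGroup E] [NormedSpace ℝ E] [FiniteDimensional ℝ E] {K : Set E}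
    (hK : Convex ℝ K) (hne : K.Nonempty) (h0 : (0 : E) ∉ intrinsicInterior ℝ K) :
    ∃ f : E →ₗ[ℝ] ℝ, (∀ k ∈ K, 0 ≤ f k) ∧ ∃ k ∈ K, 0 < f k := by
  by_cases h0A : (0 : E) ∈ affineSpan ℝ K
  · set W := (affineSpan ℝ K).direction
    have hW : (W : Set E) = affineSpan ℝ K := by
      rw [AffineSubspace.coe_direction_eq_vsub_set_right h0A]
      simp
    have hKW : K ⊆ W := hW ▸ subset_affineSpan ℝ K
    obtain ⟨q, hq⟩ := hne.intrinsicInterior hK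
    obtain ⟨g, hg, k, hk, hgk⟩ :=
      (hK.linear_preimage W.subtype).exists_nonneg_pos_of_zero_notMem_interior
        ⟨⟨q, hKW (intrinsicInterior_subset hq)⟩, (W.coe_mem_intrinsicInterior_iff hW).1 hq⟩
        fun h => h0 ((W.coe_mem_intrinsicInterior_iff hW (w := 0)).2 h)
    obtain ⟨f, hf⟩ := LinearMap.exists_extend (g : W →ₗ[ℝ] ℝ)
    have hfg (w : W) : f w = g w := LinearMap.congr_fun hf w
    exact ⟨f, fun k hk => (hfg ⟨k, hKW hk⟩).trans_ge (hg _ hk), k, hk, (hfg k).trans_gt hgk⟩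
  · obtain ⟨f, u, hf0, hfu⟩ := geometric_hahn_banach_point_closed (affineSpan ℝ K).convex
      (AffineSubspace.closed_of_finiteDimensional _) h0A
    rw [map_zero] at hf0
    have hfK (k : E) (hk : k ∈ K) : 0 < f k := hf0.trans (hfu k (subset_affineSpan ℝ K hk))
    obtain ⟨k, hk⟩ := hne
    exact ⟨f, fun k' hk' => (hfK k' hk').le, k, hk, hfK k hk⟩

/-- Proper Separation Theorem: two nonempty convex sets in ℝ^d can be properly separated by an
affine hyperplane iff their relative interiors are disjoint. -/
theorem proper_separation_iff_relint_disjoint (d : ℕ)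
    (C D : Set (Fin d → ℝ)) (hC : C.Nonempty) (hD : D.Nonempty)
    (hCc : Convex ℝ C) (hDc : Convex ℝ D) :
    (∃ (f : (Fin d → ℝ) →ₗ[ℝ] ℝ) (c : ℝ), f ≠ 0 ∧
        (∀ x ∈ C, f x ≤ c) ∧ (∀ y ∈ D, c ≤ f y) ∧ ¬(C ∪ D ⊆ {x | f x = c})) ↔
    intrinsicInterior ℝ C ∩ intrinsicInterior ℝ D = ∅ := by
  constructor
  · rintro ⟨f, c, -, hfC, hfD, hproper⟩
    refine eq_empty_iff_forall_notMem.2 fun x ⟨hxC, hxD⟩ => hproper ?_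
    have hfx : f x = c :=
      (hfC x (intrinsicInterior_subset hxC)).antisymm (hfD x (intrinsicInterior_subset hxD))
    rintro z (hz | hz)
    · rw [← hfx]
      exact f.eq_of_isMaxOn_of_mem_intrinsicInterior (fun y hy => hfx ▸ hfC y hy) hxC hz
    · have := (-f).eq_of_isMaxOn_of_mem_intrinsicInterior
        (fun y hy => by simpa [hfx] using hfD y hy) hxD hz
      simpa [hfx] using this
  · intro hri
    obtain ⟨a, ha⟩ := hC.intrinsicInterior hCc
    obtain ⟨b, hb⟩ := hD.intrinsicInterior hDc
    have h0 : (0 : Fin d → ℝ) ∉ intrinsicInterior ℝ (D - C) := fun h0 =>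
      (intrinsicInterior_inter_nonempty_of_zero_mem_intrinsicInterior_sub hCc hDc ha hb h0).ne_empty
        hri
    obtain ⟨f, hf, _, ⟨y, hy, x, hx, rfl⟩, hxy⟩ :=
      (hDc.sub hCc).exists_nonneg_pos_of_zero_notMem_intrinsicInterior (hD.sub hC) h0
    rw [map_sub, sub_pos] at hxy
    obtain ⟨c, hcC, hcD⟩ := exists_between_of_forall_le (hC.image f) (hD.image f) <|
      forall_mem_image.2 fun x hx => forall_mem_image.2 fun y hy => by
        simpa using hf _ (sub_mem_sub hy hx)
    refine ⟨f, c, fun hf0 => by simp [hf0] at hxy, fun x hx => hcC (mem_image_of_mem f hx),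
      fun y hy => hcD (mem_image_of_mem f hy), fun hsub => hxy.ne ?_⟩
    rw [show f x = c from hsub (Or.inl hx), show f y = c from hsub (Or.inr hy)]
end

section
/- Let d ≥ 2 and consider 2d points on the d-dimensional moment curve with distinct parameters, colored red and blue with d points of each color, where the point with smallest parameter is red. The two (d−1)-simplices spanned by the red points and by the blue points have intersecting relative interiors if and only if the sequence of colors (in increasing parameter order) contains an alternating subsequence of length d+2. -/
/-- The point on the d-dimensional moment curve with parameter t. -/
def momentCurve (d : ℕ) (t : ℝ) : Fin d → ℝ := fun j => t ^ ((j : ℕ) + 1)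

/-!
A point in both relative interiors amounts to an affine dependence `∑ cᵢ γ(tᵢ) = 0`,
`∑ cᵢ = 0` with `cᵢ > 0` on the red and `cᵢ < 0` on the blue points, because each colour class
consists of only `d` points of the moment curve and is therefore affinely independent. Such a `c`
amounts to a functional `p ↦ ∑ cᵢ p(tᵢ)` vanishing on the polynomials of degree at most `d`.

If the colour sequence changes at most `d` times, a polynomial with one root between each pair of
consecutive differently coloured parameters has the sign pattern of `c`, and the functional is
positive on it. Conversely, `cᵢ = q(tᵢ) / ∏_{j ≠ i} (tᵢ - tⱼ)` vanishes on all polynomials of degree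
below `2d - 1 - deg q` (it computes a coefficient of the interpolation polynomial), and its
denominators alternate in sign; so if the colours change at least `d + 1` times, taking for `q` a
polynomial with one root at each of the at most `d - 2` places where the colour does not change
gives the required signs. Finally, `d + 1` colour changes are the same as an alternating
subsequence of length `d + 2`.
-/

open Finset Polynomial Function

def HasSignPattern {ι : Type*} (c : ι → ℝ) (P : ι → Prop) : Prop :=
  ∀ i, c i ≠ 0 ∧ (0 < c i ↔ P i)

lemma mul_pos_iff_of_ne_zero {x y : ℝ} (hx : x ≠ 0) (hy : y ≠ 0) :
    0 < x * y ↔ (0 < x ↔ 0 < y) := by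
  rcases hx.lt_or_gt with hx | hx <;> rcases hy.lt_or_gt with hy | hy
  · simp [mul_pos_of_neg_of_neg hx hy, hx.le.not_gt, hy.le.not_gt]
  · simp [(mul_neg_of_neg_of_pos hx hy).le.not_gt, hx.le.not_gt, hy]
  · simp [(mul_neg_of_pos_of_neg hx hy).le.not_gt, hx, hy.le.not_gt]
  · simp [mul_pos hx hy, hx, hy]

lemma HasSignPattern.mul {ι : Type*} {a b : ι → ℝ} {P Q : ι → Prop} (ha : HasSignPattern a P)
    (hb : HasSignPattern b Q) : HasSignPattern (fun i => a i * b i) (fun i => P i ↔ Q i) :=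
  fun i => ⟨mul_ne_zero (ha i).1 (hb i).1, by
    rw [mul_pos_iff_of_ne_zero (ha i).1 (hb i).1, (ha i).2, (hb i).2]⟩

open Classical in
noncomputable def signChanges {m : ℕ} (P : Fin (m + 1) → Prop) : Finset (Fin m) :=
  {i | ¬(P i.castSucc ↔ P i.succ)}

section SignChanges

variable {m : ℕ} {P Q : Fin (m + 1) → Prop}

lemma mem_signChanges {i : Fin m} : i ∈ signChanges P ↔ ¬(P i.castSucc ↔ P i.succ) := by
  simp [signChanges]

lemma signChanges_iff :
    signChanges (fun i => P i ↔ Q i) = symmDiff (signChanges P) (signChanges Q) := by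
  ext i
  simp only [mem_signChanges, Finset.mem_symmDiff]
  tauto

lemma HasSignPattern.mem_signChanges_iff_mul_neg {c : Fin (m + 1) → ℝ} (hc : HasSignPattern c P)
    (i : Fin m) : i ∈ signChanges P ↔ c i.castSucc * c i.succ < 0 := by
  rw [mem_signChanges, ← (hc _).2, ← (hc _).2, ← mul_pos_iff_of_ne_zero (hc _).1 (hc _).1, not_lt,
    (mul_ne_zero (hc _).1 (hc _).1).le_iff_lt]

lemma exists_mem_signChanges_of_not_iff {a b : Fin (m + 1)} (hab : a ≤ b) (h : ¬(P a ↔ P b)) :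
    ∃ i ∈ signChanges P, a ≤ i.castSucc ∧ i.succ ≤ b := by
  induction b using Fin.induction with
  | zero => exact absurd (by rw [Fin.le_zero_iff.mp hab]) h
  | succ j ih =>
    have ha : a ≤ j.castSucc := by
      rcases hab.lt_or_eq with hlt | rfl
      · exact Fin.le_castSucc_iff.mpr hlt
      · exact absurd Iff.rfl h
    by_cases hj : j ∈ signChanges P
    · exact ⟨j, hj, ha, le_rfl⟩
    · obtain ⟨i, hi, hai, hij⟩ :=
        ih ha fun h' => h (h'.trans (not_not.mp (mem_signChanges.not.mp hj)))
      exact ⟨i, hi, hai, hij.trans (Fin.castSucc_le_succ j)⟩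

lemma iff_of_signChanges_eq_empty (h : signChanges P = ∅) (a b : Fin (m + 1)) : P a ↔ P b := by
  wlog hab : a ≤ b generalizing a b
  · exact (this b a (le_of_not_ge hab)).symm
  by_contra hne
  obtain ⟨i, hi, -⟩ := exists_mem_signChanges_of_not_iff hab hne
  simp [h] at hi

lemma hasSignPattern_or_neg {c : Fin (m + 1) → ℝ} (hc : ∀ i, c i ≠ 0)
    (h : signChanges (fun i => 0 < c i) = signChanges P) :
    HasSignPattern c P ∨ HasSignPattern (fun i => -c i) P := by
  have hconst (i : Fin (m + 1)) : (P i ↔ 0 < c i) ↔ (P 0 ↔ 0 < c 0) :=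
    iff_of_signChanges_eq_empty (P := fun i => P i ↔ 0 < c i)
      (by rw [signChanges_iff, h, symmDiff_self, bot_eq_empty]) i 0
  by_cases h0 : P 0 ↔ 0 < c 0
  · exact .inl fun i => ⟨hc i, ((hconst i).mpr h0).symm⟩
  · refine .inr fun i => ⟨neg_ne_zero.mpr (hc i), ?_⟩
    have := (hconst i).not.mpr h0
    rw [neg_pos, ← (hc i).le_iff_lt, ← not_lt]
    tauto

lemma iff_not_succ_of_mem_signChanges {a : Fin (m + 1)} {i : Fin m} (hi : i ∈ signChanges P)
    (hai : a ≤ i.castSucc) (hfirst : ∀ l ∈ signChanges P, a ≤ l.castSucc → i ≤ l) :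
    P a ↔ ¬P i.succ := by
  have hconst : P a ↔ P i.castSucc := by
    by_contra h
    obtain ⟨l, hl, hal, hli⟩ := exists_mem_signChanges_of_not_iff hai h
    exact (Fin.succ_le_castSucc_iff.mp hli).not_ge (hfirst l hl hal)
  have := mem_signChanges.mp hi
  tauto

lemma le_card_signChanges_of_alternating {k : ℕ} {f : Fin (k + 1) → Fin (m + 1)}
    (hf : StrictMono f) (halt : ∀ j : Fin k, (P (f j.castSucc) ↔ ¬P (f j.succ))) :
    k ≤ #(signChanges P) := by
  have hchange (j : Fin k) : ∃ i ∈ signChanges P, f j.castSucc ≤ i.castSucc ∧ i.succ ≤ f j.succ :=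
    exists_mem_signChanges_of_not_iff (hf.monotone (Fin.castSucc_le_succ j))
      fun h => by have := halt j; tauto
  choose g hgP hg using hchange
  have hgmono : StrictMono g := fun a b hab =>
    Fin.succ_le_castSucc_iff.mp <| (hg a).2.trans <|
      (hf.monotone (Fin.succ_le_castSucc_iff.mpr hab)).trans (hg b).1
  simpa using card_le_card_of_injOn (s := univ) g (fun j _ => hgP j) hgmono.injective.injOn

lemma exists_alternating_of_le_card_signChanges {k : ℕ} (hk : k ≤ #(signChanges P)) :
    ∃ f : Fin (k + 1) → Fin (m + 1), StrictMono f ∧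
      ∀ j : Fin k, (P (f j.castSucc) ↔ ¬P (f j.succ)) := by
  set e := (signChanges P).orderEmbOfFin rfl
  have hnext (a : Fin (m + 1)) (r : Fin #(signChanges P)) (har : a ≤ (e r).castSucc)
      (hfirst : ∀ r', a ≤ (e r').castSucc → r ≤ r') : P a ↔ ¬P (e r).succ := by
    refine iff_not_succ_of_mem_signChanges (orderEmbOfFin_mem _ _ r) har fun l hl hal => ?_
    obtain ⟨r', rfl⟩ : l ∈ Set.range e := by rwa [range_orderEmbOfFin]
    exact e.monotone (hfirst r' hal)
  cases k with
  | zero => exact ⟨fun _ => 0, Fin.strictMono_iff_lt_succ.mpr fun j => j.elim0, fun j => j.elim0⟩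
  | succ k =>
    refine ⟨Fin.cons 0 fun j => (e (Fin.castLE hk j)).succ, ?_, fun j => ?_⟩
    · refine Fin.strictMono_iff_lt_succ.mpr fun j => ?_
      cases j using Fin.cases with
      | zero => exact Fin.succ_pos _
      | succ j => simpa [← Fin.succ_castSucc] using e.strictMono Fin.castSucc_lt_succ
    cases j using Fin.cases with
    | zero => exact hnext 0 _ (Fin.zero_le _) fun r' _ => Fin.le_def.mpr (by simp)
    | succ j =>
      simp only [← Fin.succ_castSucc, Fin.cons_succ]
      refine hnext _ _ (Fin.succ_le_castSucc_iff.mpr (e.strictMono Fin.castSucc_lt_succ))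
        fun r' h => ?_
      have := e.lt_iff_lt.mp (Fin.succ_le_castSucc_iff.mp h)
      exact Fin.le_def.mpr (by simp [Fin.lt_def] at this ⊢; omega)

lemma exists_alternating_iff_le_card_signChanges {k : ℕ} :
    (∃ f : Fin (k + 1) → Fin (m + 1), StrictMono f ∧
      ∀ j : Fin k, (P (f j.castSucc) ↔ ¬P (f j.succ))) ↔ k ≤ #(signChanges P) :=
  ⟨fun ⟨_, hf, halt⟩ => le_card_signChanges_of_alternating hf halt,
    exists_alternating_of_le_card_signChanges⟩

end SignChanges

section Polynomials

variable {m : ℕ} {s : Fin (m + 1) → ℝ} {r : Fin m → ℝ}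

lemma eval_nodal_ne_zero_of_interlacing (hs : StrictMono s)
    (hr : ∀ j, s j.castSucc < r j ∧ r j < s j.succ) (D : Finset (Fin m)) (i : Fin (m + 1)) :
    (Lagrange.nodal D r).eval (s i) ≠ 0 := by
  rw [Lagrange.eval_nodal, prod_ne_zero_iff]
  intro j _
  rcases le_or_gt i j.castSucc with h | h
  · linarith [hs.monotone h, hr j]
  · linarith [hs.monotone (Fin.castSucc_lt_iff_succ_le.mp h), hr j]

lemma signChanges_eval_nodal_of_interlacing (hs : StrictMono s)
    (hr : ∀ j, s j.castSucc < r j ∧ r j < s j.succ) (D : Finset (Fin m)) :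
    signChanges (fun i => 0 < (Lagrange.nodal D r).eval (s i)) = D := by
  have hfactor {i j : Fin m} (hij : j ≠ i) : 0 < (s i.castSucc - r j) * (s i.succ - r j) := by
    have := hs (Fin.castSucc_lt_succ (i := i))
    rcases hij.lt_or_gt with h | h
    · nlinarith [hs.monotone (Fin.succ_le_castSucc_iff.mpr h), hr j]
    · nlinarith [hs.monotone (Fin.succ_le_castSucc_iff.mpr h), hr j]
  have hpattern : HasSignPattern (fun i => (Lagrange.nodal D r).eval (s i))
      (fun i => 0 < (Lagrange.nodal D r).eval (s i)) :=
    fun i => ⟨eval_nodal_ne_zero_of_interlacing hs hr D i, Iff.rfl⟩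
  ext i
  rw [hpattern.mem_signChanges_iff_mul_neg, Lagrange.eval_nodal, Lagrange.eval_nodal,
    ← prod_mul_distrib]
  constructor
  · intro hneg
    by_contra hi
    exact hneg.not_gt (prod_pos fun j hj => hfactor (ne_of_mem_of_not_mem hj hi))
  · intro hi
    rw [← mul_prod_erase _ _ hi]
    exact mul_neg_of_neg_of_pos (mul_neg_of_neg_of_pos (by linarith [hr i]) (by linarith [hr i]))
      (prod_pos fun j hj => hfactor (ne_of_mem_erase hj))

lemma exists_polynomial_hasSignPattern (hs : StrictMono s) (P : Fin (m + 1) → Prop) :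
    ∃ p : ℝ[X], p.natDegree ≤ #(signChanges P) ∧ HasSignPattern (fun i => p.eval (s i)) P := by
  have hr (j : Fin m) :
      s j.castSucc < (s j.castSucc + s j.succ) / 2 ∧ (s j.castSucc + s j.succ) / 2 < s j.succ := by
    constructor <;> linarith [hs (Fin.castSucc_lt_succ (i := j))]
  set p₀ := Lagrange.nodal (signChanges P) fun j => (s j.castSucc + s j.succ) / 2
  rcases hasSignPattern_or_neg (eval_nodal_ne_zero_of_interlacing hs hr _)
    (signChanges_eval_nodal_of_interlacing hs hr _) with h | h
  · exact ⟨p₀, Lagrange.natDegree_nodal.le, h⟩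
  · exact ⟨-p₀, by rw [natDegree_neg]; exact Lagrange.natDegree_nodal.le, by simpa using h⟩

lemma prod_erase_sub_pos_iff (hs : StrictMono s) (i : Fin (m + 1)) :
    0 < ∏ j ∈ univ.erase i, (s i - s j) ↔ Even (m - i) := by
  have hsplit : univ.erase i = Iio i ∪ Ioi i := by
    ext j
    simp [lt_or_lt_iff_ne]
  have hbelow : 0 < ∏ j ∈ Iio i, (s i - s j) :=
    prod_pos fun j hj => sub_pos.mpr (hs (mem_Iio.mp hj))
  have habove : ∏ j ∈ Ioi i, (s i - s j) = (-1) ^ (m - i) * ∏ j ∈ Ioi i, (s j - s i) := by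
    have hcard : #(Ioi i) = m - i := by simp [Fin.card_Ioi]
    rw [← hcard, ← prod_neg]
    simp
  have habove' : 0 < ∏ j ∈ Ioi i, (s j - s i) :=
    prod_pos fun j hj => sub_pos.mpr (hs (mem_Ioi.mp hj))
  rw [hsplit, prod_union (disjoint_left.mpr fun j h1 h2 =>
      (mem_Iio.mp h1).not_gt (mem_Ioi.mp h2)), habove, mul_pos_iff_of_pos_left hbelow,
    mul_pos_iff_of_pos_right habove']
  rcases Nat.even_or_odd (m - i) with h | h
  · simp [h.neg_one_pow, h]
  · simp [h.neg_one_pow, Nat.not_even_iff_odd.mpr h]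

end Polynomials

def IsMomentDependence {ι : Type*} [Fintype ι] (d : ℕ) (s c : ι → ℝ) : Prop :=
  ∀ p : ℝ[X], p.natDegree ≤ d → ∑ i, c i * p.eval (s i) = 0

section MomentCurve

variable {ι : Type*} [Fintype ι] {d : ℕ} {s c : ι → ℝ}

lemma isMomentDependence_iff :
    IsMomentDependence d s c ↔ ∑ i, c i = 0 ∧ ∑ i, c i • momentCurve d (s i) = 0 := by
  have hpow : (∀ k ≤ d, ∑ i, c i * s i ^ k = 0) ↔
      ∑ i, c i = 0 ∧ ∑ i, c i • momentCurve d (s i) = 0 := by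
    rw [funext_iff]
    simp only [Finset.sum_apply, Pi.smul_apply, smul_eq_mul, momentCurve, Pi.zero_apply]
    constructor
    · intro h
      exact ⟨by simpa using h 0 (Nat.zero_le d), fun j => h _ j.isLt⟩
    · rintro ⟨h0, hj⟩ (_ | k) hk
      · simpa using h0
      · exact hj ⟨k, hk⟩
  rw [← hpow]
  constructor
  · intro h k hk
    simpa using h (X ^ k) (by simpa using hk)
  · intro h p hp
    simp_rw [eval_eq_sum_range' (Nat.lt_succ_of_le hp), mul_sum]
    rw [sum_comm]
    refine sum_eq_zero fun k hk => ?_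
    simp_rw [mul_left_comm (c _), ← mul_sum, h k (Nat.lt_succ_iff.mp (mem_range.mp hk)), mul_zero]

lemma IsMomentDependence.eq_zero (hdep : IsMomentDependence d s c) (hs : Injective s)
    (hcard : Fintype.card ι ≤ d + 1) : c = 0 := by
  classical
  funext k
  have hdeg : (Lagrange.basis univ s k).natDegree ≤ d := by
    rw [Lagrange.natDegree_basis hs.injOn (mem_univ k), card_univ]
    omega
  have := hdep _ hdeg
  rwa [sum_eq_single k (fun i _ hik => by rw [Lagrange.eval_basis_of_ne hik.symm (mem_univ i),
    mul_zero]) (by simp), Lagrange.eval_basis_self hs.injOn (mem_univ k), mul_one] at this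

lemma affineIndependent_momentCurve (hs : Injective s) (hcard : Fintype.card ι ≤ d + 1) :
    AffineIndependent ℝ (fun i => momentCurve d (s i)) := by
  rw [affineIndependent_iff_of_fintype]
  intro w hw0 hw
  rw [univ.weightedVSub_eq_linear_combination hw0] at hw
  exact congrFun ((isMomentDependence_iff.mpr ⟨hw0, hw⟩).eq_zero hs hcard)

end MomentCurve

section SignedDependences

variable {m d : ℕ} {s : Fin (m + 1) → ℝ} {P : Fin (m + 1) → Prop}

lemma lt_card_signChanges_of_isMomentDependence (hs : StrictMono s) {c : Fin (m + 1) → ℝ}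
    (hc : HasSignPattern c P) (hdep : IsMomentDependence d s c) : d < #(signChanges P) := by
  by_contra! h
  obtain ⟨p, hpdeg, hp⟩ := exists_polynomial_hasSignPattern hs P
  have hpos : 0 < ∑ i, c i * p.eval (s i) :=
    sum_pos (fun i _ => ((hc.mul hp) i).2.mpr Iff.rfl) univ_nonempty
  exact hpos.ne' (hdep p (hpdeg.trans h))

lemma exists_isMomentDependence_of_lt_card_signChanges (hs : StrictMono s)
    (h : d < #(signChanges P)) : ∃ c, HasSignPattern c P ∧ IsMomentDependence d s c := by
  set w : Fin (m + 1) → ℝ := fun i => ∏ j ∈ univ.erase i, (s i - s j)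
  have hw : HasSignPattern (fun i => (w i)⁻¹) (fun i => Even (m - i)) := fun i =>
    ⟨inv_ne_zero <| prod_ne_zero_iff.mpr fun j hj =>
      sub_ne_zero.mpr (hs.injective.ne (ne_of_mem_erase hj).symm),
      inv_pos.trans (prod_erase_sub_pos_iff hs i)⟩
  have hwchanges : signChanges (fun i : Fin (m + 1) => Even (m - i)) = univ := by
    ext i
    have : m - i = m - (i + 1) + 1 := by omega
    simp [mem_signChanges, this, Nat.even_add_one, -Nat.not_even_iff_odd]
  obtain ⟨q, hqdeg, hq⟩ := exists_polynomial_hasSignPattern hs (fun i => P i ↔ Even (m - i))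
  rw [signChanges_iff, hwchanges, ← top_eq_univ, symmDiff_top, hnot_eq_compl, card_compl,
    Fintype.card_fin] at hqdeg
  refine ⟨fun i => q.eval (s i) * (w i)⁻¹, fun i => ?_, fun p hp => ?_⟩
  · have := (hq.mul hw) i
    exact ⟨this.1, this.2.trans (by tauto)⟩
  · have hdeg : (p * q).natDegree < m := by
      have := natDegree_mul_le (p := p) (q := q)
      have : #(signChanges P) ≤ m := by simpa using card_le_univ (signChanges P)
      omega
    -- Lagrange interpolation: `∑ᵢ f(sᵢ) / wᵢ` is the `X ^ m`-coefficient of any `f` of degree `≤ m`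
    have := Lagrange.coeff_eq_sum (s := univ) (v := s) hs.injective.injOn (P := p * q) (by
      rw [card_univ, Fintype.card_fin]
      exact degree_le_natDegree.trans_lt (by exact_mod_cast hdeg.trans (Nat.lt_succ_self m)))
    rw [card_univ, Fintype.card_fin, Nat.add_sub_cancel, coeff_eq_zero_of_natDegree_lt hdeg] at this
    rw [this]
    refine sum_congr rfl fun i _ => ?_
    rw [eval_mul]
    ring

end SignedDependences

theorem exists_isMomentDependence_iff_exists_alternating {n d : ℕ} [NeZero n] {t : Fin n → ℝ}
    (ht : StrictMono t) (P : Fin n → Prop) :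
    (∃ c, HasSignPattern c P ∧ IsMomentDependence d t c) ↔
      ∃ f : Fin (d + 2) → Fin n, StrictMono f ∧
        ∀ k : Fin (d + 1), (P (f k.castSucc) ↔ ¬P (f k.succ)) := by
  obtain ⟨m, rfl⟩ := Nat.exists_eq_succ_of_ne_zero (NeZero.ne n)
  rw [exists_alternating_iff_le_card_signChanges]
  exact ⟨fun ⟨c, hc, hdep⟩ => lt_card_signChanges_of_isMomentDependence ht hc hdep,
    exists_isMomentDependence_of_lt_card_signChanges ht⟩

section IntrinsicInterior

variable {E : Type*} [NormedAddCommGroup E] [NormedSpace ℝ E]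

lemma intrinsicInterior_eq_interior_of_affineSpan_eq_top {s : Set E} (h : affineSpan ℝ s = ⊤) :
    intrinsicInterior ℝ s = interior s := by
  refine subset_antisymm ?_ interior_subset_intrinsicInterior
  rintro _ ⟨y, hy, rfl⟩
  rw [mem_interior] at hy ⊢
  obtain ⟨U, hUs, hUo, hyU⟩ := hy
  obtain ⟨V, hVo, rfl⟩ := isOpen_induced_iff.mp hUo
  refine ⟨V, fun z hz => ?_, hVo, hyU⟩
  have hz' : z ∈ affineSpan ℝ s := h ▸ AffineSubspace.mem_top ℝ E z
  exact hUs (show (⟨z, hz'⟩ : affineSpan ℝ s) ∈ V.preimage (↑) from hz)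

theorem AffineIndependent.intrinsicInterior_convexHull {ι : Type*} [Fintype ι] {p : ι → E}
    (hp : AffineIndependent ℝ p) :
    intrinsicInterior ℝ (convexHull ℝ (Set.range p)) =
      {x | ∃ w : ι → ℝ, (∀ i, 0 < w i) ∧ ∑ i, w i = 1 ∧ ∑ i, w i • p i = x} := by
  cases isEmpty_or_nonempty ι with
  | inl => simp [Set.range_eq_empty]
  | inr hι =>
  obtain ⟨i₀⟩ := id hι
  set W := vectorSpan ℝ (Set.range p)
  let q : ι → W := fun i =>
    ⟨p i - p i₀, vsub_mem_vectorSpan ℝ (Set.mem_range_self i) (Set.mem_range_self i₀)⟩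
  let ψ : W →ᵃⁱ[ℝ] E :=
    (AffineIsometryEquiv.vaddConst ℝ (p i₀)).toAffineIsometry.comp W.subtypeₗᵢ.toAffineIsometry
  have hψ (w : ι → ℝ) (hw : ∑ i, w i = 1) : ψ (∑ i, w i • q i) = ∑ i, w i • p i := by
    simp [ψ, q, smul_sub, sum_sub_distrib, ← sum_smul, hw]
  have hpq : ψ ∘ q = p := funext fun i => by simp [ψ, q]
  have hq : AffineIndependent ℝ q := AffineIndependent.of_comp ψ.toAffineMap (by simpa [hpq])
  have hspan : affineSpan ℝ (Set.range q) = ⊤ := by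
    have hcard : Fintype.card ι = Fintype.card ι - 1 + 1 :=
      (Nat.sub_add_cancel Fintype.card_pos).symm
    rw [hq.affineSpan_eq_top_iff_card_eq_finrank_add_one, hp.finrank_vectorSpan hcard]
    exact hcard
  let b : AffineBasis ι ℝ W := ⟨q, hq, hspan⟩
  have hconv : convexHull ℝ (Set.range p) = ψ '' convexHull ℝ (Set.range b) := by
    rw [← hpq, Set.range_comp]
    exact (ψ.toAffineMap.image_convexHull _).symm
  rw [hconv, AffineIsometry.intrinsicInterior_image,
    intrinsicInterior_eq_interior_of_affineSpan_eq_top (by rw [affineSpan_convexHull]; exact hspan),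
    b.interior_convexHull]
  ext x
  constructor
  · rintro ⟨y, hy, rfl⟩
    refine ⟨fun i => b.coord i y, hy, b.sum_coord_apply_eq_one y, ?_⟩
    rw [← hψ _ (b.sum_coord_apply_eq_one y)]
    exact congrArg ψ (b.linear_combination_coord_eq_self y)
  · rintro ⟨w, hw0, hw1, rfl⟩
    refine ⟨∑ i, w i • q i, fun i => ?_, hψ w hw1⟩
    have := b.coord_apply_combination_of_mem (mem_univ i) hw1
    rw [univ.affineCombination_eq_linear_combination _ _ hw1] at this
    exact this ▸ hw0 i

theorem AffineIndependent.intrinsicInterior_convexHull_image {ι : Type*} {p : ι → E}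
    {S : Finset ι} (hp : AffineIndependent ℝ (fun i : S => p i)) :
    intrinsicInterior ℝ (convexHull ℝ (p '' S)) =
      {x | ∃ w : ι → ℝ, (∀ i ∈ S, 0 < w i) ∧ ∑ i ∈ S, w i = 1 ∧ ∑ i ∈ S, w i • p i = x} := by
  classical
  rw [show p '' S = Set.range (fun i : S => p i) by ext; simp, hp.intrinsicInterior_convexHull]
  ext x
  constructor
  · rintro ⟨w, hw0, hw1, rfl⟩
    refine ⟨fun i => if h : i ∈ S then w ⟨i, h⟩ else 0, fun i hi => by simpa [hi] using hw0 ⟨i, hi⟩,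
      ?_, ?_⟩
    · rw [← sum_coe_sort S, ← hw1]
      simp
    · rw [← sum_coe_sort S]
      simp
  · rintro ⟨w, hw0, hw1, rfl⟩
    exact ⟨fun i => w i, fun i => hw0 i i.2, by rwa [sum_coe_sort S w],
      sum_coe_sort S (fun i => w i • p i)⟩

end IntrinsicInterior

theorem momentCurve_simplices_cross_iff {ι : Type*} [Fintype ι] [DecidableEq ι] {d : ℕ} {t : ι → ℝ}
    (ht : Injective t) {S : Finset ι} (hS : S.Nonempty) (hSd : #S ≤ d + 1) (hSc : #Sᶜ ≤ d + 1) :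
    (intrinsicInterior ℝ (convexHull ℝ ((fun i => momentCurve d (t i)) '' S)) ∩
      intrinsicInterior ℝ (convexHull ℝ ((fun i => momentCurve d (t i)) '' ↑Sᶜ))).Nonempty ↔
    ∃ c, HasSignPattern c (· ∈ S) ∧ IsMomentDependence d t c := by
  have hind (T : Finset ι) (hT : #T ≤ d + 1) :
      AffineIndependent ℝ (fun i : T => momentCurve d (t i)) :=
    affineIndependent_momentCurve (ht.comp Subtype.val_injective) (by simpa using hT)
  rw [(hind S hSd).intrinsicInterior_convexHull_image,
    (hind Sᶜ hSc).intrinsicInterior_convexHull_image]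
  constructor
  · rintro ⟨_, ⟨u, hu0, hu1, rfl⟩, ⟨v, hv0, hv1, hx⟩⟩
    refine ⟨fun i => if i ∈ S then u i else -v i, fun i => ?_, isMomentDependence_iff.mpr ⟨?_, ?_⟩⟩
    · by_cases hi : i ∈ S
      · simp [hi, (hu0 i hi).ne', hu0 i hi]
      · have := hv0 i (mem_compl.mpr hi)
        simp [hi, this.ne', this.le]
    · simp [sum_ite, ← compl_filter, hu1, hv1]
    · simp [ite_smul, sum_ite, ← compl_filter, hx]
  · rintro ⟨c, hc, hdep⟩
    obtain ⟨hsum, hmoment⟩ := isMomentDependence_iff.mp hdep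
    rw [← sum_add_sum_compl S] at hsum hmoment
    set σ := ∑ i ∈ S, c i
    have hσ : 0 < σ := sum_pos (fun i hi => (hc i).2.mpr hi) hS
    refine ⟨σ⁻¹ • ∑ i ∈ S, c i • momentCurve d (t i),
      ⟨fun i => σ⁻¹ * c i, fun i hi => mul_pos (inv_pos.mpr hσ) ((hc i).2.mpr hi), ?_, ?_⟩,
      ⟨fun i => -σ⁻¹ * c i, fun i hi => ?_, ?_, ?_⟩⟩
    · rw [← mul_sum, inv_mul_cancel₀ hσ.ne']
    · simp [mul_smul, smul_sum]
    · have hneg : c i < 0 :=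
        ((hc i).1.lt_or_gt).resolve_right fun h => mem_compl.mp hi ((hc i).2.mp h)
      exact mul_pos_of_neg_of_neg (neg_neg_iff_pos.mpr (inv_pos.mpr hσ)) hneg
    · rw [← mul_sum, eq_neg_of_add_eq_zero_right hsum, neg_mul_neg, inv_mul_cancel₀ hσ.ne']
    · simp [mul_smul, ← smul_sum, eq_neg_of_add_eq_zero_right hmoment]

/-- For 2d points on the moment curve colored red/blue (d each, smallest parameter red),
the red and blue (d-1)-simplices cross iff the color sequence contains an alternating
subsequence of length d+2. -/
theorem moment_curve_red_blue_crossing (d : ℕ) (hd : 2 ≤ d)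
    (t : Fin (2 * d) → ℝ) (ht : StrictMono t)
    (red : Finset (Fin (2 * d))) (hred : red.card = d) :
    (intrinsicInterior ℝ (convexHull ℝ ((fun i => momentCurve d (t i)) '' red)) ∩
     intrinsicInterior ℝ
       (convexHull ℝ ((fun i => momentCurve d (t i)) '' (redᶜ : Finset (Fin (2 * d)))))).Nonempty ↔
    ∃ f : Fin (d + 2) → Fin (2 * d), StrictMono f ∧
      ∀ k : Fin (d + 1), (f k.castSucc ∈ red ↔ f k.succ ∉ red) := by
  have : NeZero (2 * d) := ⟨by omega⟩
  have hblue : #redᶜ = d := by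
    rw [card_compl, Fintype.card_fin, hred]
    omega
  rw [momentCurve_simplices_cross_iff ht.injective (card_pos.mp (by omega)) (by omega) (by omega)]
  exact exists_isMomentDependence_iff_exists_alternating ht (· ∈ red)
end
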